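/- Fix η₀ > 0 and integers n ≥ 0 and m ≥ 1. Then 16 s₀ q_{n+1,m} τ_{n,m} = −2 s₀ (2n+3)(2n+2m+1) q_{n+1,m−1} + 8 m q_{n+2,m}. In particular both terms on the right-hand side have the sign (−1)^m, so τ_{n,m} > 0 for m ≥ 1. -/

import Mathlib

/-!
Integrating `d/ds [(1 - s²)^p (t - s)^(-a)]` over `[-1, 1]`, where this boundary term vanishes,
relates three integrals of the representation of `Q`; with `Γ(x + 1) = x Γ(x)` this becomes the
recurrence `q_{n+2,m+1} = t₀ q_{n+1,m+1} + (s₀ / 2)(2n + 2m + 3) q_{n+1,m}`, and substituting it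
into the definition of `τ_{n,m}` gives the identity. The integrand of the representation is
positive, so `q_{n,m}` has the sign `(-1)^m` for `n ≥ 1`; hence both terms on the right-hand side,
and with them `q_{n+1,m} τ_{n,m}`, have the sign `(-1)^m`.
-/

open Real MeasureTheory intervalIntegral Filter Topology

/-- Associated Legendre function of the second kind of half-integer degree,
`Q_{n-1/2}^m(t)`, defined via its real integral representation (valid for `t > 1`). -/
noncomputable def Qh (n m : ℕ) (t : ℝ) : ℝ :=
  ((-1 : ℝ) ^ m / (2 : ℝ) ^ ((n : ℝ) + 1 / 2)) *
    (Real.Gamma ((n : ℝ) + (m : ℝ) + 1 / 2) / Real.Gamma ((n : ℝ) + 1 / 2)) *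
    (t ^ 2 - 1) ^ ((m : ℝ) / 2) *
    ∫ s in (-1 : ℝ)..1, (1 - s ^ 2) ^ ((n : ℝ) - 1 / 2) * (t - s) ^ (-((n : ℝ) + (m : ℝ) + 1 / 2))

/-- `q_{n,m} = Q_{n-1/2}^m(cosh η₀)`. -/
noncomputable def qh (η₀ : ℝ) (n m : ℕ) : ℝ := Qh n m (Real.cosh η₀)

/-- `Φ_n^{+1}(θ) = cos (n θ)`, `Φ_n^{-1}(θ) = sin (n θ)`. -/
noncomputable def Phi (ν : ℤ) (n : ℤ) (θ : ℝ) : ℝ :=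
  if ν = 1 then Real.cos ((n : ℝ) * θ) else Real.sin ((n : ℝ) * θ)

/-- A quadruple `(n, m, ν, μ)` is admissible. -/
def Admissible (n m : ℕ) (ν μ : ℤ) : Prop :=
  (ν = 1 ∨ ν = -1) ∧ (μ = 1 ∨ μ = -1) ∧ ¬(n = 0 ∧ ν = -1) ∧ ¬(m = 0 ∧ μ = -1)

/-- Toroidal Neumann constant `ρ_{n,m}(η₀)` (`n ≥ 1`). -/
noncomputable def rhoT (η₀ : ℝ) (n m : ℕ) : ℝ :=
  if n = 1 then
    (1 / (2 * Real.sinh η₀)) *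
      (Real.cosh η₀ + (2 * (m : ℝ) - 1) * qh η₀ 1 m / qh η₀ 0 m)
  else
    (1 / (4 * Real.sinh η₀)) *
      ((2 * (n : ℝ) - 1) * Real.cosh η₀ +
        (2 * ((m : ℝ) - (n : ℝ)) + 1) * qh η₀ n m / qh η₀ (n - 1) m)

/-- Toroidal Neumann constant `σ_{n,m}(η₀)`. -/
noncomputable def sigmaT (η₀ : ℝ) (n m : ℕ) : ℝ :=
  (-1 / (2 * Real.sinh η₀)) *
    ((2 * (n : ℝ) * Real.cosh η₀ ^ 2 + 1) +
      (2 * ((m : ℝ) - (n : ℝ)) - 1) * Real.cosh η₀ * qh η₀ (n + 1) m / qh η₀ n m)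

/-- Toroidal Neumann constant `τ_{n,m}(η₀)`. -/
noncomputable def tauT (η₀ : ℝ) (n m : ℕ) : ℝ :=
  (1 / (4 * Real.sinh η₀)) *
    ((2 * (n : ℝ) + 3) * Real.cosh η₀ +
      (2 * ((m : ℝ) - (n : ℝ)) - 3) * qh η₀ (n + 2) m / qh η₀ (n + 1) m)

/-- The normal derivative `N_{n,m}^{ν,μ}(θ,φ)` of the interior toroidal harmonic
`I_{n,m}^{ν,μ}` on the torus `η = η₀`. -/
noncomputable def NDer (η₀ : ℝ) (n m : ℕ) (ν μ : ℤ) (θ φ : ℝ) : ℝ :=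
  (Real.sqrt (Real.cosh η₀ - Real.cos θ) / (4 * Real.sinh η₀)) * Phi μ (m : ℤ) φ *
    (Phi ν ((n : ℤ) - 1) θ *
        ((1 + 2 * (n : ℝ)) * Real.cosh η₀ -
          (2 * ((n : ℝ) - (m : ℝ)) + 1) * qh η₀ (n + 1) m / qh η₀ n m) -
      2 * Phi ν (n : ℤ) θ *
        ((2 * (n : ℝ) * Real.cosh η₀ ^ 2 + 1) -
          (2 * ((n : ℝ) - (m : ℝ)) + 1) * Real.cosh η₀ * qh η₀ (n + 1) m / qh η₀ n m) +
      Phi ν ((n : ℤ) + 1) θ *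
        ((1 + 2 * (n : ℝ)) * Real.cosh η₀ -
          (2 * ((n : ℝ) - (m : ℝ)) + 1) * qh η₀ (n + 1) m / qh η₀ n m))

/-- Interior toroidal harmonic `I_{n,m}^{ν,μ}[η₀]` in toroidal coordinates. -/
noncomputable def Ih (η₀ : ℝ) (n m : ℕ) (ν μ : ℤ) (η θ φ : ℝ) : ℝ :=
  Real.sqrt (Real.cosh η - Real.cos θ) *
    (Qh n m (Real.cosh η) / Qh n m (Real.cosh η₀)) * Phi ν (n : ℤ) θ * Phi μ (m : ℤ) φ

noncomputable def legendreIntegral (t c b : ℝ) : ℝ :=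
  ∫ s in (-1 : ℝ)..1, (1 - s ^ 2) ^ c * (t - s) ^ b

section LegendreIntegral

variable {t : ℝ}

lemma continuousOn_legendreIntegrand {c : ℝ} (b : ℝ) (hc : 0 ≤ c) (ht : 1 < t) :
    ContinuousOn (fun s : ℝ => (1 - s ^ 2) ^ c * (t - s) ^ b) (Set.uIcc (-1) 1) := by
  rw [Set.uIcc_of_le (by norm_num)]
  refine (Continuous.continuousOn ?_).mul fun s hs => ?_
  · exact (continuous_sub_left 1).comp (continuous_pow 2) |>.rpow_const fun _ => Or.inr hc
  · exact (continuousAt_const.sub continuousAt_id |>.rpow_const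
      (Or.inl (sub_pos.2 (hs.2.trans_lt ht)).ne')).continuousWithinAt

lemma intervalIntegrable_legendreIntegrand {c : ℝ} (b : ℝ) (hc : 0 ≤ c) (ht : 1 < t) :
    IntervalIntegrable (fun s : ℝ => (1 - s ^ 2) ^ c * (t - s) ^ b) volume (-1) 1 :=
  (continuousOn_legendreIntegrand b hc ht).intervalIntegrable

lemma legendreIntegral_pos {c : ℝ} (b : ℝ) (hc : 0 ≤ c) (ht : 1 < t) :
    0 < legendreIntegral t c b := by
  refine intervalIntegral_pos_of_pos_on (intervalIntegrable_legendreIntegrand b hc ht)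
    (fun s hs => ?_) (by norm_num)
  have : 0 < 1 - s ^ 2 := by nlinarith [hs.1, hs.2]
  have : 0 < t - s := by linarith [hs.2]
  positivity

/-- The derivative of the boundary term of the integration by parts below, written with
`s = t - (t - s)` so that it integrates to three `legendreIntegral`s. -/
lemma hasDerivAt_legendreBoundary {p s : ℝ} (a : ℝ) (hp : 1 ≤ p) (ht : 1 < t)
    (hs : s ∈ Set.uIcc (-1) 1) :
    HasDerivAt (fun s : ℝ => (1 - s ^ 2) ^ p * (t - s) ^ (-a))
      (2 * p * ((1 - s ^ 2) ^ (p - 1) * (t - s) ^ (1 - a) -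
          t * ((1 - s ^ 2) ^ (p - 1) * (t - s) ^ (-a))) +
        a * ((1 - s ^ 2) ^ p * (t - s) ^ (-(a + 1)))) s := by
  rw [Set.uIcc_of_le (by norm_num)] at hs
  have hts : 0 < t - s := by linarith [hs.2]
  have hu : HasDerivAt (fun s : ℝ => (1 - s ^ 2) ^ p) (p * (1 - s ^ 2) ^ (p - 1) * (-2 * s)) s :=
    (Real.hasDerivAt_rpow_const (Or.inr hp)).comp s
      (by simpa using (hasDerivAt_pow 2 s).const_sub 1)
  have hv : HasDerivAt (fun s : ℝ => (t - s) ^ (-a)) (-a * (t - s) ^ (-a - 1) * -1) s :=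
    (Real.hasDerivAt_rpow_const (Or.inl hts.ne')).comp s
      (by simpa using (hasDerivAt_id s).const_sub t)
  refine (hu.mul hv).congr_deriv ?_
  rw [show 1 - a = -a + 1 by ring, show -(a + 1) = -a - 1 by ring, Real.rpow_add hts,
    Real.rpow_one]
  ring

/-- Integration by parts against `(1 - s²)^p (t - s)^(-a)`, which vanishes at `s = ±1`. -/
lemma legendreIntegral_recurrence {p : ℝ} (a : ℝ) (hp : 1 ≤ p) (ht : 1 < t) :
    a * legendreIntegral t p (-(a + 1)) =
      2 * p * (t * legendreIntegral t (p - 1) (-a) - legendreIntegral t (p - 1) (1 - a)) := by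
  have hp0 : 0 ≤ p - 1 := by linarith
  have hI₀ := intervalIntegrable_legendreIntegrand (1 - a) hp0 ht
  have hI₁ := (intervalIntegrable_legendreIntegrand (-a) hp0 ht).const_mul t
  have hI₂ := intervalIntegrable_legendreIntegrand (-(a + 1)) (by linarith : (0 : ℝ) ≤ p) ht
  have hFTC := intervalIntegral.integral_eq_sub_of_hasDerivAt
    (fun s hs => hasDerivAt_legendreBoundary a hp ht hs)
    (((hI₀.sub hI₁).const_mul _).add (hI₂.const_mul a))
  rw [intervalIntegral.integral_add ((hI₀.sub hI₁).const_mul _) (hI₂.const_mul a),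
    intervalIntegral.integral_const_mul, intervalIntegral.integral_sub hI₀ hI₁,
    intervalIntegral.integral_const_mul, intervalIntegral.integral_const_mul] at hFTC
  simp only [one_pow, neg_one_sq, sub_self, Real.zero_rpow (by linarith : p ≠ 0), zero_mul]
    at hFTC
  simp only [legendreIntegral]
  linarith

end LegendreIntegral

section LegendreQ

variable {t : ℝ}

lemma Qh_eq_neg_one_pow_mul (n m : ℕ) :
    Qh n m t = (-1) ^ m * (Real.Gamma (n + m + 1 / 2) / Real.Gamma (n + 1 / 2) /
      2 ^ ((n : ℝ) + 1 / 2) * (t ^ 2 - 1) ^ ((m : ℝ) / 2) *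
        legendreIntegral t (n - 1 / 2) (-(n + m + 1 / 2))) := by
  rw [Qh, legendreIntegral]
  ring

lemma neg_one_pow_mul_Qh_pos {n : ℕ} (m : ℕ) (hn : 1 ≤ n) (ht : 1 < t) :
    0 < (-1) ^ m * Qh n m t := by
  have hn' : (1 : ℝ) ≤ n := by exact_mod_cast hn
  have hJ := legendreIntegral_pos (-(n + m + 1 / 2)) (by linarith : (0 : ℝ) ≤ n - 1 / 2) ht
  have hΓ₁ := Real.Gamma_pos_of_pos (by positivity : (0 : ℝ) < n + m + 1 / 2)
  have hΓ₂ := Real.Gamma_pos_of_pos (by positivity : (0 : ℝ) < n + 1 / 2)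
  have ht' : 0 < t ^ 2 - 1 := by nlinarith
  rw [Qh_eq_neg_one_pow_mul, ← mul_assoc, ← mul_pow, neg_one_mul, neg_neg, one_pow, one_mul]
  positivity

lemma Qh_add_two_succ (n m : ℕ) (ht : 1 < t) :
    Qh (n + 2) (m + 1) t = t * Qh (n + 1) (m + 1) t +
      √(t ^ 2 - 1) / 2 * (2 * n + 2 * m + 3) * Qh (n + 1) m t := by
  set a : ℝ := n + m + 3 / 2
  have ha0 : 0 < a := by positivity
  have hJ := legendreIntegral_recurrence (t := t) (a + 1) (p := n + 3 / 2) (by linarith) ht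
  have hΓa : Real.Gamma (a + 1) = a * Real.Gamma a := Real.Gamma_add_one ha0.ne'
  have hΓa' : Real.Gamma (a + 2) = (a + 1) * Real.Gamma (a + 1) := by
    rw [← Real.Gamma_add_one (by positivity)]; ring_nf
  have hΓn : Real.Gamma (n + 5 / 2) = (n + 3 / 2) * Real.Gamma (n + 3 / 2) := by
    rw [← Real.Gamma_add_one (by positivity)]; ring_nf
  have h2 : (2 : ℝ) ^ ((n : ℝ) + 5 / 2) = 2 * 2 ^ ((n : ℝ) + 3 / 2) := by
    rw [show (n : ℝ) + 5 / 2 = (n + 3 / 2) + 1 by ring, Real.rpow_add_one two_ne_zero]; ring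
  have hsqrt :
      (t ^ 2 - 1) ^ ((m : ℝ) / 2 + 1 / 2) = (t ^ 2 - 1) ^ ((m : ℝ) / 2) * √(t ^ 2 - 1) := by
    rw [Real.rpow_add (by nlinarith), Real.sqrt_eq_rpow]
  rw [show a + 1 + 1 = a + 2 by ring, show 1 - (a + 1) = -a by ring] at hJ
  have hJ₂ : legendreIntegral t (n + 3 / 2) (-(a + 2)) = 2 * (n + 3 / 2) *
      (t * legendreIntegral t (n + 3 / 2 - 1) (-(a + 1)) -
        legendreIntegral t (n + 3 / 2 - 1) (-a)) / (a + 1) :=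
    eq_div_of_mul_eq (by linarith : 0 < a + 1).ne' ((mul_comm _ _).trans hJ)
  simp only [Qh_eq_neg_one_pow_mul]
  push_cast
  rw [show (n : ℝ) + 2 + (m + 1) + 1 / 2 = a + 2 by ring,
    show (n : ℝ) + 2 + 1 / 2 = n + 5 / 2 by ring, show (n : ℝ) + 2 - 1 / 2 = n + 3 / 2 by ring,
    show ((m : ℝ) + 1) / 2 = m / 2 + 1 / 2 by ring,
    show (n : ℝ) + 1 + (m + 1) + 1 / 2 = a + 1 by ring,
    show (n : ℝ) + 1 + 1 / 2 = n + 3 / 2 by ring,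
    show (n : ℝ) + 1 - 1 / 2 = n + 3 / 2 - 1 by ring, show (n : ℝ) + 1 + m + 1 / 2 = a by ring,
    hΓa', hΓa, hΓn, h2, hsqrt, pow_succ, hJ₂]
  have hΓ := (Real.Gamma_pos_of_pos ha0).ne'
  have hΓ' := (Real.Gamma_pos_of_pos (by positivity : (0 : ℝ) < n + 3 / 2)).ne'
  field_simp
  ring

end LegendreQ

section ToroidalQ

variable {η₀ : ℝ}

lemma neg_one_pow_mul_qh_pos {n : ℕ} (hη₀ : η₀ ≠ 0) (m : ℕ) (hn : 1 ≤ n) :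
    0 < (-1) ^ m * qh η₀ n m :=
  neg_one_pow_mul_Qh_pos m hn (Real.one_lt_cosh.2 hη₀)

lemma qh_add_two_succ (hη₀ : 0 < η₀) (n m : ℕ) :
    qh η₀ (n + 2) (m + 1) = Real.cosh η₀ * qh η₀ (n + 1) (m + 1) +
      Real.sinh η₀ / 2 * (2 * n + 2 * m + 3) * qh η₀ (n + 1) m := by
  have h := Qh_add_two_succ n m (Real.one_lt_cosh.2 hη₀.ne')
  rwa [Real.cosh_sq, add_sub_cancel_right, Real.sqrt_sq (Real.sinh_pos_iff.2 hη₀).le] at h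

lemma sinh_mul_qh_mul_tauT (hη₀ : 0 < η₀) (n m : ℕ) :
    16 * Real.sinh η₀ * qh η₀ (n + 1) (m + 1) * tauT η₀ n (m + 1) =
      -2 * Real.sinh η₀ * (2 * (n : ℝ) + 3) * (2 * (n : ℝ) + 2 * ((m + 1 : ℕ) : ℝ) + 1) *
          qh η₀ (n + 1) m +
        8 * ((m + 1 : ℕ) : ℝ) * qh η₀ (n + 2) (m + 1) := by
  have hs := (Real.sinh_pos_iff.2 hη₀).ne'
  have hq := right_ne_zero_of_mul
    (neg_one_pow_mul_qh_pos hη₀.ne' (m + 1) (by omega : 1 ≤ n + 1)).ne'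
  rw [tauT]
  push_cast
  field_simp
  linear_combination (-16 * (2 * (n : ℝ) + 3)) * qh_add_two_succ hη₀ n m

end ToroidalQ

/-- identity for `16 s₀ q_{n+1,m} τ_{n,m}`; both right-hand terms have
sign `(-1)^m`, hence `τ_{n,m} > 0` for `m ≥ 1`. -/
theorem tau_identity_and_positivity (η₀ : ℝ) (hη₀ : 0 < η₀) (n m : ℕ) (hm : 1 ≤ m) :
    16 * Real.sinh η₀ * qh η₀ (n + 1) m * tauT η₀ n m =
      -2 * Real.sinh η₀ * (2 * (n : ℝ) + 3) * (2 * (n : ℝ) + 2 * (m : ℝ) + 1) *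
          qh η₀ (n + 1) (m - 1) +
        8 * (m : ℝ) * qh η₀ (n + 2) m ∧
    0 < (-1 : ℝ) ^ m *
      (-2 * Real.sinh η₀ * (2 * (n : ℝ) + 3) * (2 * (n : ℝ) + 2 * (m : ℝ) + 1) *
        qh η₀ (n + 1) (m - 1)) ∧
    0 < (-1 : ℝ) ^ m * (8 * (m : ℝ) * qh η₀ (n + 2) m) ∧
    0 < tauT η₀ n m := by
  obtain ⟨k, rfl⟩ := Nat.exists_eq_add_of_le' hm
  rw [Nat.add_sub_cancel]
  have hs : 0 < Real.sinh η₀ := Real.sinh_pos_iff.2 hη₀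
  have hq₀ := neg_one_pow_mul_qh_pos hη₀.ne' k (by omega : 1 ≤ n + 1)
  have hq₁ := neg_one_pow_mul_qh_pos hη₀.ne' (k + 1) (by omega : 1 ≤ n + 1)
  have hq₂ := neg_one_pow_mul_qh_pos hη₀.ne' (k + 1) (by omega : 1 ≤ n + 2)
  have hid := sinh_mul_qh_mul_tauT hη₀ n k
  have hP₁ : 0 < (-1 : ℝ) ^ (k + 1) *
      (-2 * Real.sinh η₀ * (2 * (n : ℝ) + 3) * (2 * (n : ℝ) + 2 * ((k + 1 : ℕ) : ℝ) + 1) *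
        qh η₀ (n + 1) k) := by
    have h : (0 : ℝ) < 2 * (2 * (n : ℝ) + 3) * (2 * (n : ℝ) + 2 * ((k + 1 : ℕ) : ℝ) + 1) := by
      positivity
    linear_combination mul_pos h (mul_pos hs hq₀)
  have hP₂ : 0 < (-1 : ℝ) ^ (k + 1) * (8 * ((k + 1 : ℕ) : ℝ) * qh η₀ (n + 2) (k + 1)) := by
    rw [mul_left_comm]
    exact mul_pos (by positivity) hq₂
  refine ⟨hid, hP₁, hP₂, pos_of_mul_pos_right (a := 16 * Real.sinh η₀ * ((-1) ^ (k + 1) *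
    qh η₀ (n + 1) (k + 1))) ?_ (mul_pos (by positivity) hq₁).le⟩
  linear_combination -(-1 : ℝ) ^ (k + 1) * hid + hP₁ + hP₂
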